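/- arXiv:1005.0453 — 2 statements merged into one kernel-verified Lean document; each statement's English description precedes it below -/
import Mathlib

section
/- Let a < b be real numbers and let f : ℝ → ℝ be twice differentiable on an open interval containing [a,b] with f'' Lebesgue integrable on [a,b]. If the function x ↦ |f''(x)| is convex on [a,b] and f'(a) = f'(b), then |(1/(b−a))·∫_a^b f(x) dx − (f(a)+f(b))/2| ≤ ((b−a)²/48)·(|f''(a)| + |f''(b)|). -/
/-!
Two integrations by parts against the kernel `k x = (x - (a + b)/2)^2 / 2` give
`∫ k f'' = (b - a)^2/8 (f'(b) - f'(a)) - (b - a)(f(a) + f(b))/2 + ∫ f`, and the first term vanishes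
when `f'(a) = f'(b)`. Convexity bounds `|f''|` on `[a, b]` by its chord, and `k` integrated against
that chord is `(b - a)^3/48 (|f''(a)| + |f''(b)|)`.
-/

open MeasureTheory Set intervalIntegral

theorem ConvexOn.sub_mul_le_of_mem_Icc {g : ℝ → ℝ} {a b x : ℝ} (hg : ConvexOn ℝ (Icc a b) g)
    (hx : x ∈ Icc a b) : (b - a) * g x ≤ (b - x) * g a + (x - a) * g b := by
  rcases hx.1.eq_or_lt with rfl | hax
  · simp
  rcases hx.2.eq_or_lt with rfl | hxb
  · simp
  exact hg.secant_mono_aux1 (left_mem_Icc.2 (hax.trans hxb).le)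
    (right_mem_Icc.2 (hax.trans hxb).le) hax hxb

theorem integral_sq_sub_midpoint_mul_deriv2 {f f' f'' : ℝ → ℝ} {a b : ℝ}
    (hf : ∀ x ∈ uIcc a b, HasDerivAt f (f' x) x) (hf' : ∀ x ∈ uIcc a b, HasDerivAt f' (f'' x) x)
    (hf'' : IntervalIntegrable f'' volume a b) :
    ∫ x in a..b, (x - (a + b) / 2) ^ 2 / 2 * f'' x
      = (b - a) ^ 2 / 8 * (f' b - f' a) - (b - a) / 2 * (f a + f b) + ∫ x in a..b, f x := by
  have hsq : ∀ x ∈ uIcc a b, HasDerivAt (fun y => (y - (a + b) / 2) ^ 2 / 2) (x - (a + b) / 2) x :=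
    fun x _ => by simpa using (((hasDerivAt_id x).sub_const ((a + b) / 2)).pow 2).div_const 2
  have hlin : ∀ x ∈ uIcc a b, HasDerivAt (fun y => y - (a + b) / 2) 1 x :=
    fun x _ => (hasDerivAt_id x).sub_const _
  have hf'int : IntervalIntegrable f' volume a b :=
    ContinuousOn.intervalIntegrable fun x hx => (hf' x hx).continuousAt.continuousWithinAt
  rw [integral_mul_deriv_eq_deriv_mul hsq hf'
      (Continuous.intervalIntegrable (by fun_prop) _ _) hf'',
    integral_mul_deriv_eq_deriv_mul hlin hf (by simp) hf'int]
  simp only [one_mul]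
  ring

theorem integral_sq_sub_midpoint_mul_affine (a b A B : ℝ) :
    ∫ x in a..b, (x - (a + b) / 2) ^ 2 / 2 * ((b - x) * A + (x - a) * B)
      = (b - a) ^ 4 / 48 * (A + B) := by
  have h : ∀ x, (x - (a + b) / 2) ^ 2 / 2 * ((b - x) * A + (x - a) * B) =
      (fun t => (b - a) * (A + B) / 4 * t ^ 2 + (B - A) / 2 * t ^ 3) (x - (a + b) / 2) := by
    intro x; ring
  simp_rw [h, integral_comp_sub_right
    (fun t => (b - a) * (A + B) / 4 * t ^ 2 + (B - A) / 2 * t ^ 3)]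
  simp only [intervalIntegrable_pow, IntervalIntegrable.const_mul, intervalIntegral.integral_add,
    intervalIntegral.integral_const_mul, integral_pow]
  ring

theorem abs_integral_sq_sub_midpoint_mul_le {g : ℝ → ℝ} {a b : ℝ} (hab : a < b)
    (hg : IntervalIntegrable g volume a b) (hconv : ConvexOn ℝ (Icc a b) fun x => |g x|) :
    |∫ x in a..b, (x - (a + b) / 2) ^ 2 / 2 * g x| ≤ (b - a) ^ 3 / 48 * (|g a| + |g b|) := by
  have hba : 0 < b - a := sub_pos.2 hab
  have hkg : IntervalIntegrable (fun x => (x - (a + b) / 2) ^ 2 / 2 * g x) volume a b :=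
    hg.continuousOn_mul (by fun_prop)
  have hbound : ∀ x ∈ Icc a b, |(x - (a + b) / 2) ^ 2 / 2 * g x|
      ≤ (x - (a + b) / 2) ^ 2 / 2 * (((b - x) * |g a| + (x - a) * |g b|) / (b - a)) := by
    intro x hx
    rw [abs_mul, abs_of_nonneg (by positivity)]
    gcongr
    rw [le_div_iff₀ hba, mul_comm]
    exact hconv.sub_mul_le_of_mem_Icc hx
  calc |∫ x in a..b, (x - (a + b) / 2) ^ 2 / 2 * g x|
      ≤ ∫ x in a..b, |(x - (a + b) / 2) ^ 2 / 2 * g x| := abs_integral_le_integral_abs hab.le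
    _ ≤ ∫ x in a..b, (x - (a + b) / 2) ^ 2 / 2 * (((b - x) * |g a| + (x - a) * |g b|) / (b - a)) :=
        integral_mono_on hab.le hkg.abs (Continuous.intervalIntegrable (by fun_prop) _ _) hbound
    _ = (b - a) ^ 3 / 48 * (|g a| + |g b|) := by
        simp only [mul_div_assoc', intervalIntegral.integral_div,
          integral_sq_sub_midpoint_mul_affine]
        field_simp

/-- Trapezoid inequality: if |f''| is convex on [a,b] and f'(a) = f'(b), then
|(1/(b−a))∫_a^b f − (f(a)+f(b))/2| ≤ ((b−a)²/48)(|f''(a)|+|f''(b)|). -/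
theorem stmt_3 (f f' f'' : ℝ → ℝ) (a b u v : ℝ) (hab : a < b)
(hua : u < a) (hbv : b < v)
    (hf' : ∀ x ∈ Set.Ioo u v, HasDerivAt f (f' x) x)
    (hf'' : ∀ x ∈ Set.Ioo u v, HasDerivAt f' (f'' x) x)
    (hint : IntervalIntegrable f'' MeasureTheory.volume a b)
    (hconv : ConvexOn ℝ (Set.Icc a b) (fun x => |f'' x|))
    (hder : f' a = f' b) :
    |(1 / (b - a)) * (∫ x in a..b, f x) - (f a + f b) / 2|
      ≤ ((b - a) ^ 2 / 48) * (|f'' a| + |f'' b|) := by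
  have hba : 0 < b - a := sub_pos.2 hab
  have hsub : uIcc a b ⊆ Ioo u v := by
    rw [uIcc_of_le hab.le]
    exact Icc_subset_Ioo hua hbv
  have hpeano := integral_sq_sub_midpoint_mul_deriv2 (fun x hx => hf' x (hsub hx))
    (fun x hx => hf'' x (hsub hx)) hint
  rw [hder, sub_self, mul_zero, zero_sub] at hpeano
  calc |(1 / (b - a)) * (∫ x in a..b, f x) - (f a + f b) / 2|
      = |(∫ x in a..b, (x - (a + b) / 2) ^ 2 / 2 * f'' x) / (b - a)| := by
        rw [hpeano]
        congr 1
        field_simp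
        ring
    _ = |∫ x in a..b, (x - (a + b) / 2) ^ 2 / 2 * f'' x| / (b - a) := by
        rw [abs_div, abs_of_pos hba]
    _ ≤ (b - a) ^ 3 / 48 * (|f'' a| + |f'' b|) / (b - a) := by
        gcongr
        exact abs_integral_sq_sub_midpoint_mul_le hab hint hconv
    _ = (b - a) ^ 2 / 48 * (|f'' a| + |f'' b|) := by
        field_simp
end

section
/- Let a < b be real numbers and let f : ℝ → ℝ be twice differentiable on an open interval containing [a,b] with f'' Lebesgue integrable on [a,b]. Let p, q > 1 satisfy 1/p + 1/q = 1. If the function x ↦ |f''(x)|^q is convex on [a,b], then |(1/(b−a))·∫_a^b f(x) dx − f((a+b)/2)| ≤ ((b−a)²/(16·(2p+1)^(1/p))) · ( ((|f''(a)|^q + 3·|f''(b)|^q)/4)^(1/q) + ((3·|f''(a)|^q + |f''(b)|^q)/4)^(1/q) ). -/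
/-!
Integrating by parts twice gives, with `m = (a + b) / 2`,
`(1/(b-a)) ∫_a^b f - f m = (1/(b-a)) (∫_a^m (x-a)²/2 f''(x) dx + ∫_m^b (x-b)²/2 f''(x) dx)`.
On each half, Hölder's inequality bounds the integral by the `L^p` norm of the kernel,
`((b-a)/2)^(2+1/p) / (2 (2p+1)^(1/p))`, times the `L^q` norm of `f''`. Convexity of `|f''|^q`
bounds its integral over a half by that of its chord, e.g. `(b-a)/2 · (3|f''(a)|^q + |f''(b)|^q)/4`
over `[a, m]`; since `2 + 1/p + 1/q = 3`, the powers of `(b-a)/2` combine to a cube.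
-/

open MeasureTheory Set intervalIntegral

theorem ConvexOn.le_chord {g : ℝ → ℝ} {a b x : ℝ} (hg : ConvexOn ℝ (Icc a b) g) (hab : a < b)
    (hx : x ∈ Icc a b) : g x ≤ ((b - x) * g a + (x - a) * g b) / (b - a) := by
  have hba : b - a ≠ 0 := (sub_pos.2 hab).ne'
  have hcomb := hg.2 (left_mem_Icc.2 hab.le) (right_mem_Icc.2 hab.le)
    (div_nonneg (sub_nonneg.2 hx.2) (sub_pos.2 hab).le)
    (div_nonneg (sub_nonneg.2 hx.1) (sub_pos.2 hab).le) (by field_simp; ring)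
  have hx_eq : ((b - x) / (b - a)) • a + ((x - a) / (b - a)) • b = x := by
    simp only [smul_eq_mul]; field_simp; ring
  rw [hx_eq] at hcomb
  refine hcomb.trans_eq ?_
  simp only [smul_eq_mul]
  field_simp

theorem integral_chord {A B a b c d : ℝ} (hab : a ≠ b) :
    ∫ x in c..d, ((b - x) * A + (x - a) * B) / (b - a)
      = (d - c) * ((b - (c + d) / 2) * A + ((c + d) / 2 - a) * B) / (b - a) := by
  have hba : b - a ≠ 0 := sub_ne_zero.2 hab.symm
  have haffine : ∀ x : ℝ, ((b - x) * A + (x - a) * B) / (b - a)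
      = (b * A - a * B) / (b - a) + (B - A) / (b - a) * x := fun x => by field_simp; ring
  simp_rw [haffine]
  rw [intervalIntegral.integral_add intervalIntegrable_const (intervalIntegrable_id.const_mul _),
    intervalIntegral.integral_const, intervalIntegral.integral_const_mul, integral_id,
    smul_eq_mul]
  field_simp
  ring

theorem ConvexOn.intervalIntegral_le {g : ℝ → ℝ} {a b c d : ℝ} (hg : ConvexOn ℝ (Icc a b) g)
    (hab : a < b) (hac : a ≤ c) (hcd : c ≤ d) (hdb : d ≤ b)
    (hint : IntervalIntegrable g volume c d) :
    ∫ x in c..d, g x ≤ (d - c) * ((b - (c + d) / 2) * g a + ((c + d) / 2 - a) * g b) / (b - a) := by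
  rw [← integral_chord hab.ne]
  exact integral_mono_on hcd hint (Continuous.intervalIntegrable (by fun_prop) c d)
    fun x hx => hg.le_chord hab ⟨hac.trans hx.1, hx.2.trans hdb⟩

theorem ConvexOn.intervalIntegrable {g : ℝ → ℝ} {a b : ℝ} (hg : ConvexOn ℝ (Icc a b) g)
    (hab : a ≤ b) : IntervalIntegrable g volume a b := by
  have hcont : ContinuousOn g (Ioo a b) := by
    simpa only [interior_Icc] using hg.continuousOn_interior
  set M := max (g a) (g b)
  have hupper : ∀ x ∈ Icc a b, g x ≤ M := fun x hx =>
    hg.le_on_segment (left_mem_Icc.2 hab) (right_mem_Icc.2 hab) (by rwa [segment_eq_Icc hab])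
  -- convexity at the midpoint of `x` and its reflection `a + b - x`
  have hlower : ∀ x ∈ Icc a b, 2 * g ((a + b) / 2) - M ≤ g x := by
    intro x hx
    have hx' : a + b - x ∈ Icc a b := ⟨by linarith [hx.2], by linarith [hx.1]⟩
    have hmid := hg.2 hx hx' (by norm_num : (0:ℝ) ≤ 1 / 2) (by norm_num : (0:ℝ) ≤ 1 / 2)
      (by norm_num)
    simp only [smul_eq_mul] at hmid
    rw [show 1 / 2 * x + 1 / 2 * (a + b - x) = (a + b) / 2 by ring] at hmid
    linarith [hupper _ hx']
  rw [intervalIntegrable_iff_integrableOn_Ioo_of_le hab]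
  refine IntegrableOn.of_bound measure_Ioo_lt_top (hcont.aestronglyMeasurable measurableSet_Ioo)
    (max |2 * g ((a + b) / 2) - M| |M|)
    ((ae_restrict_iff' measurableSet_Ioo).2 (.of_forall fun x hx => ?_))
  exact abs_le_max_abs_abs (hlower x (Ioo_subset_Icc_self hx)) (hupper x (Ioo_subset_Icc_self hx))

theorem abs_intervalIntegral_mul_le_Lp_mul_Lq {f g : ℝ → ℝ} {c d p q : ℝ} (hcd : c ≤ d)
    (hpq : p.HolderConjugate q) (hf : MemLp f (ENNReal.ofReal p) (volume.restrict (Ioc c d)))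
    (hg : MemLp g (ENNReal.ofReal q) (volume.restrict (Ioc c d))) :
    |∫ x in c..d, f x * g x|
      ≤ (∫ x in c..d, |f x| ^ p) ^ (1 / p) * (∫ x in c..d, |g x| ^ q) ^ (1 / q) := by
  simp only [integral_of_le hcd]
  calc |∫ x in Ioc c d, f x * g x| ≤ ∫ x in Ioc c d, |f x| * |g x| := by
        simp_rw [← abs_mul]; exact MeasureTheory.abs_integral_le_integral_abs
    _ ≤ _ := integral_mul_norm_le_Lp_mul_Lq hpq hf hg

theorem integral_abs_sq_div_two_rpow {h p : ℝ} (hh : 0 ≤ h) (hp : 0 ≤ p) :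
    ∫ x in (0:ℝ)..h, |x ^ 2 / 2| ^ p = h ^ (2 * p + 1) / ((2 * p + 1) * 2 ^ p) := by
  have hpow : EqOn (fun x : ℝ => |x ^ 2 / 2| ^ p) (fun x => x ^ (2 * p) / 2 ^ p) (uIcc 0 h) := by
    intro x hx
    rw [uIcc_of_le hh] at hx
    simp only
    rw [abs_of_nonneg (by positivity), Real.div_rpow (sq_nonneg x) zero_le_two,
      ← Real.rpow_natCast x 2, ← Real.rpow_mul hx.1, Nat.cast_ofNat]
  rw [integral_congr hpow, intervalIntegral.integral_div,
    integral_rpow (Or.inl (by linarith)), Real.zero_rpow (by linarith), sub_zero, div_div]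

theorem integral_abs_sub_left_sq_div_two_rpow {c d p : ℝ} (hcd : c ≤ d) (hp : 0 ≤ p) :
    ∫ x in c..d, |(x - c) ^ 2 / 2| ^ p = (d - c) ^ (2 * p + 1) / ((2 * p + 1) * 2 ^ p) := by
  rw [integral_comp_sub_right (fun y => |y ^ 2 / 2| ^ p), sub_self,
    integral_abs_sq_div_two_rpow (sub_nonneg.2 hcd) hp]

theorem integral_abs_sub_right_sq_div_two_rpow {c d p : ℝ} (hcd : c ≤ d) (hp : 0 ≤ p) :
    ∫ x in c..d, |(x - d) ^ 2 / 2| ^ p = (d - c) ^ (2 * p + 1) / ((2 * p + 1) * 2 ^ p) := by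
  simp_rw [show ∀ x : ℝ, (x - d) ^ 2 = (d - x) ^ 2 from fun x => by ring]
  rw [integral_comp_sub_left (fun y => |y ^ 2 / 2| ^ p), sub_self,
    integral_abs_sq_div_two_rpow (sub_nonneg.2 hcd) hp]

theorem abs_integral_mul_le_of_integral_rpow_le {K g : ℝ → ℝ} {c d p q M : ℝ}
    (hpq : p.HolderConjugate q) (hcd : c ≤ d) (hK : Continuous K)
    (hKp : ∫ x in c..d, |K x| ^ p = (d - c) ^ (2 * p + 1) / ((2 * p + 1) * 2 ^ p))
    (hg : MemLp g (ENNReal.ofReal q) (volume.restrict (Ioc c d)))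
    (hM : 0 ≤ M) (hgM : ∫ x in c..d, |g x| ^ q ≤ (d - c) * M) :
    |∫ x in c..d, K x * g x| ≤ (d - c) ^ 3 / (2 * (2 * p + 1) ^ (1 / p)) * M ^ (1 / q) := by
  have hp := hpq.pos
  have hq := hpq.symm.pos
  have hh : 0 ≤ d - c := sub_nonneg.2 hcd
  have hKmem : MemLp K (ENNReal.ofReal p) (volume.restrict (Ioc c d)) := by
    obtain ⟨C, hC⟩ :=
      (isCompact_Icc (a := c) (b := d)).exists_bound_of_continuousOn hK.continuousOn
    exact MemLp.of_bound hK.aestronglyMeasurable.restrict C <| (ae_restrict_iff' measurableSet_Ioc).2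
      <| .of_forall fun x hx => hC x (Ioc_subset_Icc_self hx)
  have hexp : (2 * p + 1) * (1 / p) + 1 / q = 3 := by
    rw [show (2 * p + 1) * (1 / p) = 2 + p⁻¹ by field_simp, one_div, add_assoc,
      hpq.inv_add_inv_eq_one]
    norm_num
  calc |∫ x in c..d, K x * g x|
      ≤ (∫ x in c..d, |K x| ^ p) ^ (1 / p) * (∫ x in c..d, |g x| ^ q) ^ (1 / q) :=
        abs_intervalIntegral_mul_le_Lp_mul_Lq hcd hpq hKmem hg
    _ ≤ ((d - c) ^ (2 * p + 1) / ((2 * p + 1) * 2 ^ p)) ^ (1 / p) * ((d - c) * M) ^ (1 / q) := by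
        rw [hKp]
        gcongr
        exact integral_nonneg hcd fun x _ => by positivity
    _ = (d - c) ^ ((2 * p + 1) * (1 / p) + 1 / q) / (2 * (2 * p + 1) ^ (1 / p)) * M ^ (1 / q) := by
        rw [Real.div_rpow (by positivity) (by positivity),
          Real.mul_rpow (by linarith) (by positivity), ← Real.rpow_mul hh,
          ← Real.rpow_mul zero_le_two, mul_one_div_cancel hp.ne', Real.rpow_one,
          Real.mul_rpow hh hM, Real.rpow_add' hh (by rw [hexp]; norm_num)]
        ring
    _ = _ := by rw [hexp]; norm_cast

theorem integral_sub_sq_div_two_mul_eq {f f' f'' : ℝ → ℝ} {c d : ℝ}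
    (hf : ∀ x ∈ uIcc c d, HasDerivAt f (f' x) x) (hf' : ∀ x ∈ uIcc c d, HasDerivAt f' (f'' x) x)
    (hf'' : IntervalIntegrable f'' volume c d) :
    ∫ x in c..d, (x - c) ^ 2 / 2 * f'' x
      = (d - c) ^ 2 / 2 * f' d - (d - c) * f d + ∫ x in c..d, f x := by
  have hsq : ∀ x : ℝ, HasDerivAt (fun y => (y - c) ^ 2 / 2) (x - c) x := fun x => by
    simpa using (((hasDerivAt_id x).sub_const c).pow 2).div_const 2
  have hf'_int : IntervalIntegrable f' volume c d :=
    ContinuousOn.intervalIntegrable fun x hx => (hf' x hx).continuousAt.continuousWithinAt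
  rw [integral_mul_deriv_eq_deriv_mul (fun x _ => hsq x) hf'
      ((continuous_id.sub continuous_const).intervalIntegrable c d) hf'',
    integral_mul_deriv_eq_deriv_mul (fun x _ => (hasDerivAt_id' x).sub_const c) hf
      intervalIntegrable_const hf'_int]
  simp only [sub_self, one_mul]
  ring

theorem midpoint_error_eq {f f' f'' : ℝ → ℝ} {a b : ℝ} (hab : a ≠ b)
    (hf : ∀ x ∈ uIcc a b, HasDerivAt f (f' x) x) (hf' : ∀ x ∈ uIcc a b, HasDerivAt f' (f'' x) x)
    (hf'' : IntervalIntegrable f'' volume a b) :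
    1 / (b - a) * (∫ x in a..b, f x) - f ((a + b) / 2)
      = 1 / (b - a) * ((∫ x in a..(a + b) / 2, (x - a) ^ 2 / 2 * f'' x)
          + ∫ x in (a + b) / 2..b, (x - b) ^ 2 / 2 * f'' x) := by
  have hm : (a + b) / 2 ∈ uIcc a b := by
    rcases le_total a b with h | h
    · exact mem_uIcc.2 (.inl ⟨by linarith, by linarith⟩)
    · exact mem_uIcc.2 (.inr ⟨by linarith, by linarith⟩)
  set m := (a + b) / 2
  have hleft : uIcc a m ⊆ uIcc a b := uIcc_subset_uIcc left_mem_uIcc hm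
  have hright : uIcc b m ⊆ uIcc a b := uIcc_subset_uIcc right_mem_uIcc hm
  have hf_cont : ContinuousOn f (uIcc a b) := fun x hx => (hf x hx).continuousAt.continuousWithinAt
  rw [integral_symm b m, integral_sub_sq_div_two_mul_eq (fun x hx => hf x (hleft hx))
      (fun x hx => hf' x (hleft hx)) (hf''.mono_set hleft),
    integral_sub_sq_div_two_mul_eq (fun x hx => hf x (hright hx))
      (fun x hx => hf' x (hright hx)) (hf''.mono_set hright),
    integral_symm m b, ← integral_add_adjacent_intervals (b := m)
      (hf_cont.mono hleft).intervalIntegrable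
      (hf_cont.mono (uIcc_comm b m ▸ hright)).intervalIntegrable]
  have : b - a ≠ 0 := sub_ne_zero.2 hab.symm
  field_simp
  ring

theorem memLp_of_convexOn_abs_rpow {g : ℝ → ℝ} {a b q : ℝ} (hab : a ≤ b) (hq : 0 < q)
    (hg : IntervalIntegrable g volume a b) (hconv : ConvexOn ℝ (Icc a b) fun x => |g x| ^ q) :
    MemLp g (ENNReal.ofReal q) (volume.restrict (Ioc a b)) := by
  refine (integrable_norm_rpow_iff hg.1.aestronglyMeasurable (by simpa using hq)
    ENNReal.ofReal_ne_top).1 ?_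
  simpa only [Real.norm_eq_abs, ENNReal.toReal_ofReal hq.le, IntegrableOn]
    using (intervalIntegrable_iff_integrableOn_Ioc_of_le hab).1 (hconv.intervalIntegrable hab)

theorem abs_integral_left_half_le {g : ℝ → ℝ} {a b p q : ℝ} (hpq : p.HolderConjugate q)
    (hab : a < b) (hg : IntervalIntegrable g volume a b)
    (hconv : ConvexOn ℝ (Icc a b) fun x => |g x| ^ q) :
    |∫ x in a..(a + b) / 2, (x - a) ^ 2 / 2 * g x|
      ≤ ((a + b) / 2 - a) ^ 3 / (2 * (2 * p + 1) ^ (1 / p))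
        * ((3 * |g a| ^ q + |g b| ^ q) / 4) ^ (1 / q) := by
  have ham : a ≤ (a + b) / 2 := by linarith
  have hmb : (a + b) / 2 ≤ b := by linarith
  have hmem := memLp_of_convexOn_abs_rpow hab.le hpq.symm.pos hg hconv
  refine abs_integral_mul_le_of_integral_rpow_le hpq ham (by fun_prop)
    (integral_abs_sub_left_sq_div_two_rpow ham hpq.nonneg)
    (hmem.mono_measure (Measure.restrict_mono (Ioc_subset_Ioc le_rfl hmb) le_rfl))
    (by positivity) ?_
  refine (hconv.intervalIntegral_le hab le_rfl ham hmb (hconv.intervalIntegrable hab.le |>.mono_set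
    (uIcc_subset_uIcc left_mem_uIcc (mem_uIcc_of_le ham hmb)))).trans_eq ?_
  have hba : b - a ≠ 0 := (sub_pos.2 hab).ne'
  field_simp
  ring

theorem abs_integral_right_half_le {g : ℝ → ℝ} {a b p q : ℝ} (hpq : p.HolderConjugate q)
    (hab : a < b) (hg : IntervalIntegrable g volume a b)
    (hconv : ConvexOn ℝ (Icc a b) fun x => |g x| ^ q) :
    |∫ x in (a + b) / 2..b, (x - b) ^ 2 / 2 * g x|
      ≤ (b - (a + b) / 2) ^ 3 / (2 * (2 * p + 1) ^ (1 / p))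
        * ((|g a| ^ q + 3 * |g b| ^ q) / 4) ^ (1 / q) := by
  have ham : a ≤ (a + b) / 2 := by linarith
  have hmb : (a + b) / 2 ≤ b := by linarith
  have hmem := memLp_of_convexOn_abs_rpow hab.le hpq.symm.pos hg hconv
  refine abs_integral_mul_le_of_integral_rpow_le hpq hmb (by fun_prop)
    (integral_abs_sub_right_sq_div_two_rpow hmb hpq.nonneg)
    (hmem.mono_measure (Measure.restrict_mono (Ioc_subset_Ioc ham le_rfl) le_rfl))
    (by positivity) ?_
  refine (hconv.intervalIntegral_le hab ham hmb le_rfl (hconv.intervalIntegrable hab.le |>.mono_set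
    (uIcc_subset_uIcc (mem_uIcc_of_le ham hmb) right_mem_uIcc))).trans_eq ?_
  have hba : b - a ≠ 0 := (sub_pos.2 hab).ne'
  field_simp
  ring

theorem stmt_5_general (f f' f'' : ℝ → ℝ) (a b u v p q : ℝ) (hab : a < b)
(hua : u < a) (hbv : b < v)
    (hf' : ∀ x ∈ Set.Ioo u v, HasDerivAt f (f' x) x)
    (hf'' : ∀ x ∈ Set.Ioo u v, HasDerivAt f' (f'' x) x)
    (hint : IntervalIntegrable f'' MeasureTheory.volume a b)
    (hp : 1 < p) (hpq : 1 / p + 1 / q = 1)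
    (hconv : ConvexOn ℝ (Set.Icc a b) (fun x => |f'' x| ^ q)) :
    |(1 / (b - a)) * (∫ x in a..b, f x) - f ((a + b) / 2)|
      ≤ ((b - a) ^ 2 / (16 * (2 * p + 1) ^ (1 / p))) *
          (((|f'' a| ^ q + 3 * |f'' b| ^ q) / 4) ^ (1 / q)
            + ((3 * |f'' a| ^ q + |f'' b| ^ q) / 4) ^ (1 / q)) := by
  have hpq' : p.HolderConjugate q :=
    Real.holderConjugate_iff.2 ⟨hp, by simpa only [one_div] using hpq⟩
  have hba : 0 < b - a := sub_pos.2 hab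
  have hsub : uIcc a b ⊆ Ioo u v := by rw [uIcc_of_le hab.le]; exact Icc_subset_Ioo hua hbv
  rw [midpoint_error_eq hab.ne (fun x hx => hf' x (hsub hx)) (fun x hx => hf'' x (hsub hx)) hint,
    abs_mul, abs_of_pos (by positivity : 0 < 1 / (b - a))]
  calc _ ≤ 1 / (b - a) * (|∫ x in a..(a + b) / 2, (x - a) ^ 2 / 2 * f'' x|
          + |∫ x in (a + b) / 2..b, (x - b) ^ 2 / 2 * f'' x|) := by gcongr; exact abs_add_le _ _
    _ ≤ 1 / (b - a) * (((a + b) / 2 - a) ^ 3 / (2 * (2 * p + 1) ^ (1 / p))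
            * ((3 * |f'' a| ^ q + |f'' b| ^ q) / 4) ^ (1 / q)
          + (b - (a + b) / 2) ^ 3 / (2 * (2 * p + 1) ^ (1 / p))
            * ((|f'' a| ^ q + 3 * |f'' b| ^ q) / 4) ^ (1 / q)) := by
        gcongr
        · exact abs_integral_left_half_le hpq' hab hint hconv
        · exact abs_integral_right_half_le hpq' hab hint hconv
    _ = _ := by field_simp; ring

/-- Corollary: midpoint Hölder-type inequality for |f''|^q convex. -/
theorem stmt_5 (f f' f'' : ℝ → ℝ) (a b u v p q : ℝ) (hab : a < b)
(hua : u < a) (hbv : b < v)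
    (hf' : ∀ x ∈ Set.Ioo u v, HasDerivAt f (f' x) x)
    (hf'' : ∀ x ∈ Set.Ioo u v, HasDerivAt f' (f'' x) x)
    (hint : IntervalIntegrable f'' MeasureTheory.volume a b)
    (hp : 1 < p) (hq : 1 < q) (hpq : 1 / p + 1 / q = 1)
    (hconv : ConvexOn ℝ (Set.Icc a b) (fun x => |f'' x| ^ q)) :
    |(1 / (b - a)) * (∫ x in a..b, f x) - f ((a + b) / 2)|
      ≤ ((b - a) ^ 2 / (16 * (2 * p + 1) ^ (1 / p))) *
          (((|f'' a| ^ q + 3 * |f'' b| ^ q) / 4) ^ (1 / q)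
            + ((3 * |f'' a| ^ q + |f'' b| ^ q) / 4) ^ (1 / q)) :=
  stmt_5_general f f' f'' a b u v p q hab hua hbv hf' hf'' hint hp hpq hconv
end
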